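/- Let S be a finite set of points in ℝ^d in general position. Then there exists an orthogonal linear map A : ℝ^d → ℝ^d such that the image A(S) has the strong general position property (SGPP): A(S) is in general position and, for every k ≥ 1 with d − 2k ≥ 1, the image of A(S) under the coordinate projection onto the last d − 2k coordinates is in general position in ℝ^{d−2k}. -/

import Mathlib

open scoped RealInnerProductSpace

/-- A set of points of `ℝ^d` is in general position if every subset of at most `d + 1`
of its points is affinely independent. -/
def InGenPos (d : ℕ) (P : Set (EuclideanSpace ℝ (Fin d))) : Prop :=
  ∀ s : Finset (EuclideanSpace ℝ (Fin d)), ↑s ⊆ P → s.card ≤ d + 1 →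
    AffineIndependent ℝ (fun x : s => (x : EuclideanSpace ℝ (Fin d)))

/-- Coordinate projection of `ℝ^d` onto the last `d - 2k` coordinates. -/
noncomputable def proj2k (d k : ℕ) (x : EuclideanSpace ℝ (Fin d)) :
    EuclideanSpace ℝ (Fin (d - 2 * k)) :=
  WithLp.toLp 2 (fun i : Fin (d - 2 * k) => x ⟨(i : ℕ) + 2 * k, by omega⟩)

/-- The strong general position property (SGPP): the set is in general position and so is
its coordinate projection onto the last `d − 2k` coordinates for every `k ≥ 1` with
`d − 2k ≥ 1`. -/
def SGPP (d : ℕ) (P : Set (EuclideanSpace ℝ (Fin d))) : Prop :=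
  InGenPos d P ∧
    ∀ k : ℕ, 1 ≤ k → 1 ≤ d - 2 * k → InGenPos (d - 2 * k) (proj2k d k '' P)

/-!
The rows `b₀, …, b_{d-1}` of `A` are chosen one at a time. The projection of `A x` onto the
last `d - 2k` coordinates vanishes exactly on `span {b_l | l < 2k}`, so the projected image of a
subset `T ⊆ S` with `|T| ≤ d - 2k + 1` stays affinely independent as soon as this span meets the
direction `U_T` of `T` trivially. That is guaranteed by `dim (U_T + span {b_l | l < i}) ≥
min (d, dim U_T + i)` for all `i`, which holds if each `b_i` is a unit vector orthogonal to the
earlier ones that avoids every proper subspace `U_T + span {b_l | l < i}`. Such a `b_i` exists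
because a real vector space is not a finite union of proper subspaces, and projecting a vector
avoiding them all onto `(span {b_l | l < i})ᗮ` keeps it outside them.
-/

open Module Submodule Set

theorem Subspace.exists_forall_notMem_of_ne_top {K E ι : Type*} [DivisionRing K] [Infinite K]
    [AddCommGroup E] [Module K E] [Finite ι] {p : ι → Subspace K E} (hp : ∀ i, p i ≠ ⊤) :
    ∃ v, ∀ i, v ∉ p i := by
  by_contra! h
  obtain ⟨i, hi⟩ := Subspace.exists_eq_top_of_iUnion_eq_univ (p := p)
    (eq_univ_of_forall fun v => mem_iUnion.2 (h v))
  exact hp i hi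

theorem finrank_span_image_Iio_le {R M : Type*} [Ring R] [StrongRankCondition R]
    [AddCommGroup M] [Module R M] (f : ℕ → M) (i : ℕ) :
    finrank R (span R (f '' Iio i)) ≤ i := by
  classical
  rw [← Finset.coe_range, ← Finset.coe_image]
  exact (finrank_span_finset_le_card _).trans (Finset.card_image_le.trans (by simp))

section GenericFlag

variable {𝕜 V J : Type*} [RCLike 𝕜] [NormedAddCommGroup V] [InnerProductSpace 𝕜 V]
  (U : J → Submodule 𝕜 V)

def IsGenericStep (f : ℕ → V) (i : ℕ) : Prop :=
  f i ∈ (span 𝕜 (f '' Iio i))ᗮ ∧ ‖f i‖ = 1 ∧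
    ∀ j, U j ⊔ span 𝕜 (f '' Iio i) ≠ ⊤ → f i ∉ U j ⊔ span 𝕜 (f '' Iio i)

variable {U} {f : ℕ → V} {r : ℕ}

theorem orthonormal_of_isGenericStep (hf : ∀ i < r, IsGenericStep U f i) :
    Orthonormal 𝕜 fun l : Fin r => f l := by
  have hlt : ∀ l m : Fin r, l < m → inner 𝕜 (f l) (f m) = 0 := fun l m hlm =>
    inner_right_of_mem_orthogonal (subset_span (mem_image_of_mem f hlm)) (hf m m.2).1
  refine ⟨fun l => (hf l l.2).2.1, fun l m hlm => ?_⟩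
  rcases lt_or_gt_of_ne hlm with h | h
  · exact hlt l m h
  · exact inner_eq_zero_symm.1 (hlt m l h)

variable [FiniteDimensional 𝕜 V]

theorem min_le_finrank_sup_span (hf : ∀ i < r, IsGenericStep U f i) (j : J) :
    ∀ i ≤ r, min (finrank 𝕜 V) (finrank 𝕜 (U j) + i) ≤
      finrank 𝕜 ↥(U j ⊔ span 𝕜 (f '' Iio i)) := by
  intro i
  induction i with
  | zero => exact fun _ => min_le_of_right_le (finrank_mono le_sup_left)
  | succ i ih =>
    intro hi
    set X := U j ⊔ span 𝕜 (f '' Iio i)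
    have hsucc : U j ⊔ span 𝕜 (f '' Iio (i + 1)) = X ⊔ 𝕜 ∙ f i := by
      rw [Iio_add_one_eq_Iic, ← Iio_insert, image_insert_eq, span_insert,
        sup_comm (𝕜 ∙ f i), ← sup_assoc]
    rw [hsucc]
    by_cases hX : X = ⊤
    · rw [hX, top_sup_eq, finrank_top]
      exact min_le_left _ _
    · have hlt : finrank 𝕜 X < finrank 𝕜 ↥(X ⊔ 𝕜 ∙ f i) :=
        finrank_lt_finrank_of_lt (lt_sup_iff_notMem.2 ((hf i hi).2.2 j hX))
      have := ih (by omega)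
      omega

variable (U)

theorem exists_norm_eq_one_mem_orthogonal_notMem_sup [Finite J] {F : Submodule 𝕜 V}
    (hF : F ≠ ⊤) :
    ∃ a ∈ Fᗮ, ‖a‖ = 1 ∧ ∀ j, U j ⊔ F ≠ ⊤ → a ∉ U j ⊔ F := by
  obtain ⟨v, hv⟩ := Subspace.exists_forall_notMem_of_ne_top
    (p := fun o : Option {j // U j ⊔ F ≠ ⊤} => o.elim F fun j => U j ⊔ F)
    (by rintro (_ | j); exacts [hF, j.2])
  obtain ⟨y, hy, z, hz, rfl⟩ := F.exists_add_mem_mem_orthogonal v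
  have hz0 : z ≠ 0 := by
    rintro rfl
    exact hv none (by simpa using hy)
  refine ⟨(‖z‖⁻¹ : 𝕜) • z, smul_mem _ _ hz, norm_smul_inv_norm hz0, fun j hj hmem => ?_⟩
  rw [smul_mem_iff _ (by simpa using hz0)] at hmem
  exact hv (some ⟨j, hj⟩) (add_mem (mem_sup_right hy) hmem)

theorem exists_isGenericStep [Finite J] (hr : r ≤ finrank 𝕜 V) :
    ∃ f : ℕ → V, ∀ i < r, IsGenericStep U f i := by
  induction r with
  | zero => exact ⟨0, by simp⟩
  | succ r ih =>
    obtain ⟨f, hf⟩ := ih (by omega)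
    have hF : span 𝕜 (f '' Iio r) ≠ ⊤ := fun htop => by
      have := finrank_span_image_Iio_le (R := 𝕜) f r
      rw [htop, finrank_top] at this
      omega
    obtain ⟨a, ha⟩ := exists_norm_eq_one_mem_orthogonal_notMem_sup U hF
    have himage : ∀ i ≤ r, Function.update f r a '' Iio i = f '' Iio i := fun i hi =>
      image_congr fun l hl => Function.update_of_ne (by simp at hl; omega) _ _
    refine ⟨Function.update f r a, fun i hi => ?_⟩
    rcases Nat.lt_succ_iff_lt_or_eq.1 hi with hi | rfl
    · simpa [IsGenericStep, himage i hi.le, Function.update_of_ne hi.ne] using hf i hi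
    · simpa [IsGenericStep, himage i le_rfl] using ha

theorem exists_orthonormalBasis_disjoint_span_lt [Finite J] {n : ℕ} (hn : finrank 𝕜 V = n) :
    ∃ b : OrthonormalBasis (Fin n) 𝕜 V, ∀ j i, finrank 𝕜 (U j) + i ≤ n →
      Disjoint (U j) (span 𝕜 (b '' {l | (l : ℕ) < i})) := by
  subst hn
  obtain ⟨f, hf⟩ := exists_isGenericStep U le_rfl
  have hon := orthonormal_of_isGenericStep hf
  let b := OrthonormalBasis.mk hon
    (hon.linearIndependent.span_eq_top_of_card_eq_finrank' (by simp)).ge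
  refine ⟨b, fun j i hi => ?_⟩
  have hsub : b '' {l | (l : ℕ) < i} ⊆ f '' Iio i := by
    rintro _ ⟨l, hl, rfl⟩
    exact ⟨l, hl, by simp [b]⟩
  refine Disjoint.mono_right (span_mono hsub) (disjoint_iff.2 ?_)
  have hsup := min_le_finrank_sup_span hf j i (by omega)
  have hspan := finrank_span_image_Iio_le (R := 𝕜) f i
  have := finrank_sup_add_finrank_inf_eq (U j) (span 𝕜 (f '' Iio i))
  rw [← finrank_eq_zero]
  omega

end GenericFlag

theorem AffineIndependent.map_of_disjoint_ker {k V W ι : Type*} [Ring k] [AddCommGroup V]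
    [Module k V] [AddCommGroup W] [Module k W] {p : ι → V} (hp : AffineIndependent k p)
    {f : V →ₗ[k] W} (hf : Disjoint (vectorSpan k (range p)) (LinearMap.ker f)) :
    AffineIndependent k (f ∘ p) := by
  rcases isEmpty_or_nonempty ι with hι | ⟨⟨i⟩⟩
  · exact affineIndependent_of_subsingleton k _
  rw [affineIndependent_iff_linearIndependent_vsub k _ i] at hp ⊢
  rw [vectorSpan_range_eq_span_range_vsub_right_ne k p i] at hf
  simpa [Function.comp_def] using hp.map hf

theorem finrank_vectorSpan_finset_le {k V : Type*} [DivisionRing k] [AddCommGroup V]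
    [Module k V] (T : Finset V) : finrank k (vectorSpan k (T : Set V)) ≤ T.card - 1 := by
  classical
  rcases T.eq_empty_or_nonempty with rfl | hT
  · rw [Finset.coe_empty, vectorSpan_empty, finrank_bot]
    exact Nat.zero_le _
  · have := finrank_vectorSpan_image_finset_le k id T (n := T.card - 1)
      (by have := hT.card_pos; omega)
    rwa [Finset.image_id] at this

theorem inGenPos_image {d D : ℕ} (f : EuclideanSpace ℝ (Fin d) →ₗ[ℝ] EuclideanSpace ℝ (Fin D))
    {S : Set (EuclideanSpace ℝ (Fin d))} (hS : InGenPos d S) (hD : D ≤ d)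
    (hf : ∀ T : Finset (EuclideanSpace ℝ (Fin d)), ↑T ⊆ S → T.card ≤ D + 1 →
      Disjoint (vectorSpan ℝ (T : Set (EuclideanSpace ℝ (Fin d)))) (LinearMap.ker f)) :
    InGenPos D (f '' S) := by
  classical
  intro s hs hcard
  obtain ⟨T, hTS, hinj, rfl⟩ := Finset.exists_subset_injOn_image_eq_of_surjOn S s hs
  rw [Finset.card_image_of_injOn hinj] at hcard
  have hT : AffineIndependent ℝ (f ∘ fun x : T => (x : EuclideanSpace ℝ (Fin d))) :=
    (hS T hTS (by omega)).map_of_disjoint_ker (by simpa using hf T hTS hcard)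
  have hrange : range (f ∘ fun x : T => (x : EuclideanSpace ℝ (Fin d))) = ↑(T.image f) := by
    simp [range_comp]
  have := hT.range
  rw [hrange] at this
  exact this

noncomputable def proj2kLinear (d k : ℕ) :
    EuclideanSpace ℝ (Fin d) →ₗ[ℝ] EuclideanSpace ℝ (Fin (d - 2 * k)) where
  toFun := proj2k d k
  map_add' _ _ := rfl
  map_smul' _ _ := rfl

theorem ker_proj2kLinear_comp_repr_le {d : ℕ} (k : ℕ)
    (b : OrthonormalBasis (Fin d) ℝ (EuclideanSpace ℝ (Fin d))) :
    LinearMap.ker ((proj2kLinear d k).comp b.repr.toLinearMap) ≤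
      span ℝ (b '' {l | (l : ℕ) < 2 * k}) := by
  intro x hx
  rw [← b.sum_repr x]
  refine sum_mem fun l _ => ?_
  by_cases hl : (l : ℕ) < 2 * k
  · exact smul_mem _ _ (subset_span (mem_image_of_mem b hl))
  · have hl' : (⟨l - 2 * k + 2 * k, by omega⟩ : Fin d) = l := Fin.ext (by simp; omega)
    have hx' : b.repr x ⟨l - 2 * k + 2 * k, by omega⟩ = 0 :=
      congrArg (fun y : EuclideanSpace ℝ (Fin (d - 2 * k)) => y ⟨l - 2 * k, by omega⟩)
        (LinearMap.mem_ker.1 hx)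
    rw [hl'] at hx'
    simp [hx']

/-- For every finite set `S ⊆ ℝ^d` in general position there is an
orthogonal (inner-product–preserving) linear map `A : ℝ^d → ℝ^d` such that `A(S)` has
the strong general position property. -/
theorem stmt_16 (d : ℕ) (S : Finset (EuclideanSpace ℝ (Fin d)))
    (hgen : InGenPos d ↑S) :
    ∃ A : EuclideanSpace ℝ (Fin d) ≃ₗᵢ[ℝ] EuclideanSpace ℝ (Fin d),
      SGPP d (⇑A '' ↑S) := by
  obtain ⟨b, hb⟩ := exists_orthonormalBasis_disjoint_span_lt
    (fun T : S.powerset => vectorSpan ℝ (T : Set (EuclideanSpace ℝ (Fin d))))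
    finrank_euclideanSpace_fin
  refine ⟨b.repr, inGenPos_image b.repr.toLinearMap hgen le_rfl fun T _ _ => by simp,
    fun k hk hdk => ?_⟩
  rw [image_image]
  refine inGenPos_image ((proj2kLinear d k).comp b.repr.toLinearMap) hgen (by omega)
    fun T hTS hcard => ?_
  refine Disjoint.mono_right (ker_proj2kLinear_comp_repr_le k b)
    (hb ⟨T, Finset.mem_powerset.2 hTS⟩ (2 * k) ?_)
  have := finrank_vectorSpan_finset_le (k := ℝ) T
  simp only
  omega
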